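/- There exists a constant c > 0 such that for every function f in H¹(𝕋²) on the 2-dimensional torus with mean zero, ‖∇f‖_{L²} · ‖∂ₓf + √2·∂_y f‖_{L²} ≥ c·‖f‖²_{L²}. -/
import Mathlib


open Real

/- We model a mean-zero function `f ∈ H¹(𝕋²)` on the flat torus `𝕋² = ℝ²/(2πℤ)²`
by its Fourier coefficients `a : ℤ × ℤ → ℂ`, `f = Σ aₖ e^{ik·x}`, `a₀ = 0`.
By Parseval, `‖f‖²_{L²} = (2π)² Σ |aₖ|²`, `‖∇f‖²_{L²} = (2π)² Σ |k|²|aₖ|²` and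
`‖⟨∇f,α⟩‖²_{L²} = (2π)² Σ ⟨k,α⟩²|aₖ|²`.  All inequalities below are homogeneous
in the number of `L²`-norm factors, so the constant `(2π)²` is harmlessly dropped. -/

/-- `‖f‖²_{L²(𝕋²)}` (modulo the factor `(2π)²`). -/
noncomputable def normSq (a : ℤ × ℤ → ℂ) : ℝ := ∑' k : ℤ × ℤ, ‖a k‖ ^ 2

/-- `‖∇f‖²_{L²(𝕋²)}` (modulo the factor `(2π)²`). -/
noncomputable def gradSq (a : ℤ × ℤ → ℂ) : ℝ :=
  ∑' k : ℤ × ℤ, (((k.1 : ℝ)) ^ 2 + ((k.2 : ℝ)) ^ 2) * ‖a k‖ ^ 2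

/-- `‖⟨∇f, α⟩‖²_{L²(𝕋²)}` (modulo the factor `(2π)²`). -/
noncomputable def dirSq (α : ℝ × ℝ) (a : ℤ × ℤ → ℂ) : ℝ :=
  ∑' k : ℤ × ℤ, (α.1 * k.1 + α.2 * k.2) ^ 2 * ‖a k‖ ^ 2

/-- `f ∈ H¹(𝕋²)`. -/
def IsH1 (a : ℤ × ℤ → ℂ) : Prop :=
  Summable (fun k : ℤ × ℤ => ‖a k‖ ^ 2) ∧
  Summable (fun k : ℤ × ℤ => (((k.1 : ℝ)) ^ 2 + ((k.2 : ℝ)) ^ 2) * ‖a k‖ ^ 2)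

/-- There is `c > 0` so that for every mean-zero `f ∈ H¹(𝕋²)`:
`‖∇f‖_{L²} ⬝ ‖∂ₓf + √2 ∂_y f‖_{L²} ≥ c ‖f‖²_{L²}`. -/
lemma sq_ne_two_mul_sq (p q : ℤ) (h : ¬(p = 0 ∧ q = 0)) : p^2 - 2*q^2 ≠ 0 := by
  intro heq
  rcases eq_or_ne q 0 with hq | hq
  · subst hq; simp at heq; exact h ⟨heq, rfl⟩
  · have h2 : ((p:ℝ)/q)^2 = 2 := by
      have hq' : (q:ℝ) ≠ 0 := Int.cast_ne_zero.2 hq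
      field_simp
      have : (p:ℝ)^2 = 2*(q:ℝ)^2 := by exact_mod_cast (by linarith : p^2 = 2*q^2)
      linarith
    have : Real.sqrt 2 = |((p:ℝ)/q)| := by
      rw [show (2:ℝ) = ((p:ℝ)/q)^2 from h2.symm, Real.sqrt_sq_eq_abs]
    exact irrational_sqrt_two ⟨|(p:ℚ)/q|, by push_cast [this]; ring⟩

lemma key (p q : ℤ) (h : ¬(p = 0 ∧ q = 0)) :
    (1:ℝ)/2 ≤ Real.sqrt ((p:ℝ)^2+(q:ℝ)^2) * |(p:ℝ) + Real.sqrt 2 * q| := by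
  have h2 : (Real.sqrt 2)^2 = 2 := Real.sq_sqrt (by norm_num)
  have h2' : Real.sqrt 2 ≤ 3/2 := by nlinarith [Real.sqrt_nonneg 2]
  have h1 : (1:ℝ) ≤ |(p:ℝ)^2 - 2*(q:ℝ)^2| := by
    have := Int.one_le_abs (sq_ne_two_mul_sq p q h)
    exact_mod_cast this
  have hfact : (p:ℝ)^2 - 2*(q:ℝ)^2 = ((p:ℝ) + Real.sqrt 2 * q) * ((p:ℝ) - Real.sqrt 2 * q) := by
    nlinarith [h2]
  have hb : |(p:ℝ) - Real.sqrt 2 * q| ≤ 2 * Real.sqrt ((p:ℝ)^2+(q:ℝ)^2) := by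
    rw [← Real.sqrt_sq_eq_abs]
    rw [show (2:ℝ) * Real.sqrt ((p:ℝ)^2+(q:ℝ)^2) = Real.sqrt (4*((p:ℝ)^2+(q:ℝ)^2)) by
      rw [show (4:ℝ)*((p:ℝ)^2+(q:ℝ)^2) = 2^2 * ((p:ℝ)^2+(q:ℝ)^2) by ring,
        Real.sqrt_mul (by norm_num), Real.sqrt_sq (by norm_num)]]
    apply Real.sqrt_le_sqrt
    nlinarith [sq_nonneg ((p:ℝ) - q), sq_nonneg ((p:ℝ) + q), Real.sqrt_nonneg 2]
  calc (1:ℝ)/2 ≤ |(p:ℝ)^2 - 2*(q:ℝ)^2| / 2 := by linarith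
    _ = |(p:ℝ) + Real.sqrt 2 * q| * |(p:ℝ) - Real.sqrt 2 * q| / 2 := by rw [hfact, abs_mul]
    _ ≤ |(p:ℝ) + Real.sqrt 2 * q| * (2 * Real.sqrt ((p:ℝ)^2+(q:ℝ)^2)) / 2 := by gcongr
    _ = Real.sqrt ((p:ℝ)^2+(q:ℝ)^2) * |(p:ℝ) + Real.sqrt 2 * q| := by ring

theorem stmt_1 :
    ∃ c > (0 : ℝ), ∀ a : ℤ × ℤ → ℂ, IsH1 a → a 0 = 0 →
      Real.sqrt (gradSq a) * Real.sqrt (dirSq (1, Real.sqrt 2) a) ≥ c * normSq a := by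
  refine ⟨1/2, by norm_num, ?_⟩
  rintro a ⟨hS, hG⟩ h0
  set f : ℤ × ℤ → ℝ := fun k => Real.sqrt ((k.1:ℝ)^2+(k.2:ℝ)^2) * ‖a k‖ with hf
  set g : ℤ × ℤ → ℝ := fun k => |(k.1:ℝ) + Real.sqrt 2 * k.2| * ‖a k‖ with hg
  have hf2 : ∀ k : ℤ × ℤ, f k ^ 2 = ((k.1:ℝ)^2+(k.2:ℝ)^2) * ‖a k‖^2 := by
    intro k
    rw [hf, mul_pow, Real.sq_sqrt (by positivity)]
  have hg2 : ∀ k : ℤ × ℤ, g k ^ 2 = ((1:ℝ) * k.1 + Real.sqrt 2 * k.2)^2 * ‖a k‖^2 := by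
    intro k
    rw [hg, mul_pow, sq_abs, one_mul]
  have hGf : Summable (fun k => f k ^ 2) := by
    simpa only [hf2] using hG
  have hDg : Summable (fun k => g k ^ 2) := by
    apply Summable.of_nonneg_of_le (fun k => sq_nonneg _) _ (hG.mul_left 4)
    intro k
    rw [hg2]
    have h2 : (Real.sqrt 2)^2 = 2 := Real.sq_sqrt (by norm_num)
    have hs2 : Real.sqrt 2 ≤ 3/2 := by nlinarith [Real.sqrt_nonneg 2]
    have := Real.sqrt_nonneg 2
    have hn : (0:ℝ) ≤ ‖a k‖^2 := sq_nonneg _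
    calc ((1:ℝ) * k.1 + Real.sqrt 2 * k.2)^2 * ‖a k‖^2
        ≤ (4 * ((k.1:ℝ)^2+(k.2:ℝ)^2)) * ‖a k‖^2 := by
          apply mul_le_mul_of_nonneg_right _ hn
          nlinarith [sq_nonneg ((k.1:ℝ) - k.2), sq_nonneg ((k.1:ℝ) + k.2),
            sq_nonneg ((k.1:ℝ) * k.2), sq_nonneg ((k.1:ℝ)^2 - (k.2:ℝ)^2)]
      _ = 4 * (((k.1:ℝ)^2+(k.2:ℝ)^2) * ‖a k‖^2) := by ring
  have hfg : Summable (fun k => f k * g k) := by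
    apply Summable.of_nonneg_of_le
      (fun k => mul_nonneg (by positivity) (by positivity)) _ ((hGf.add hDg).mul_left (1/2))
    intro k
    nlinarith [sq_nonneg (f k - g k)]
  -- pointwise lower bound
  have hpt : ∀ k : ℤ × ℤ, (1/2 : ℝ) * ‖a k‖^2 ≤ f k * g k := by
    intro k
    rcases eq_or_ne k 0 with hk | hk
    · subst hk; simp [h0, hf, hg]
    · have hk' : ¬(k.1 = 0 ∧ k.2 = 0) := by
        intro ⟨h1, h2⟩; exact hk (Prod.ext h1 h2)
      have := key k.1 k.2 hk'
      have hn : (0:ℝ) ≤ ‖a k‖^2 := sq_nonneg _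
      calc (1/2 : ℝ) * ‖a k‖^2
          ≤ (Real.sqrt ((k.1:ℝ)^2+(k.2:ℝ)^2) * |(k.1:ℝ) + Real.sqrt 2 * k.2|) * ‖a k‖^2 := by
            apply mul_le_mul_of_nonneg_right this hn
        _ = f k * g k := by rw [hf, hg]; ring
  -- Cauchy-Schwarz for tsums
  have hCS : ∑' k, f k * g k ≤ Real.sqrt (gradSq a) * Real.sqrt (dirSq (1, Real.sqrt 2) a) := by
    apply Summable.tsum_le_of_sum_le hfg
    intro s
    calc ∑ k ∈ s, f k * g k
        ≤ Real.sqrt (∑ k ∈ s, f k ^ 2) * Real.sqrt (∑ k ∈ s, g k ^ 2) :=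
          Real.sum_mul_le_sqrt_mul_sqrt s f g
      _ ≤ Real.sqrt (gradSq a) * Real.sqrt (dirSq (1, Real.sqrt 2) a) := by
          apply mul_le_mul _ _ (Real.sqrt_nonneg _) (Real.sqrt_nonneg _)
          · apply Real.sqrt_le_sqrt
            rw [gradSq]
            simp_rw [← hf2]
            exact Summable.sum_le_tsum s (fun k _ => sq_nonneg _) hGf
          · apply Real.sqrt_le_sqrt
            rw [dirSq]
            have : ∀ k : ℤ × ℤ, ((1:ℝ) * k.1 + Real.sqrt 2 * k.2)^2 * ‖a k‖^2 = g k ^ 2 :=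
              fun k => (hg2 k).symm
            simp only [this]
            exact Summable.sum_le_tsum s (fun k _ => sq_nonneg _) hDg
  have hlow : (1/2 : ℝ) * normSq a ≤ ∑' k, f k * g k := by
    rw [normSq, ← tsum_mul_left]
    exact Summable.tsum_le_tsum hpt (hS.mul_left _) hfg
  exact le_trans hlow hCS
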